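/- arXiv:2402.11370 — 4 statements merged into one kernel-verified Lean document; each statement's English description precedes it below -/
import Mathlib

section
/- (Cycle menus have size at most g − 2) Assume u ≥ 2t − 1. In any execution of the greedy algorithm (repeatedly removing an infeasible good or adding a good with a lobby of size ≥ u), no cycle can contain a menu of cardinality g − 1 or g. More precisely: if along a cycle a good j is added to a menu A with |A| ≥ g − 2 (so |j ≻ A| ≥ u), and j is removed from some menu B along the cycle (so |j ≻ B∖{j}| < t), then some good k ∈ B ∖ A has at least t agents ranking it first, contradicting that k is removed along the cycle. -/
structure MenuProblem (N G : Type) where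
  pref : N → List G
  nodup : ∀ i, (pref i).Nodup

namespace MenuProblem

variable {N G : Type} [Fintype N] [DecidableEq G]

/-- The good assigned to agent `i` when menu `O` is offered:
its favorite ranked good in `O`, if any. -/
def assigned (P : MenuProblem N G) (O : Finset G) (i : N) : Option G :=
  (P.pref i).find? (fun a => decide (a ∈ O))

/-- Number of agents assigned to good `j` when menu `O` is offered. -/
def assignedCount (P : MenuProblem N G) (O : Finset G) (j : G) : ℕ :=
  (Finset.univ.filter (fun i => P.assigned O i = some j)).card

/-- The lobby for a good `j` against menu `O`: the number of agents that
would take `j` if it were added to the menu. -/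
def lobby (P : MenuProblem N G) (O : Finset G) (j : G) : ℕ :=
  P.assignedCount (insert j O) j

/-- `|a ≻ b|`: the number of agents that would take `a` from the menu `{a, b}`. -/
def prefCount (P : MenuProblem N G) (a b : G) : ℕ :=
  P.assignedCount {a, b} a

/-- A menu is `t`-feasible if every offered good is assigned at least `t` agents. -/
def TFeasible (P : MenuProblem N G) (O : Finset G) (t : ℕ) : Prop :=
  ∀ j ∈ O, t ≤ P.assignedCount O j

/-- A menu is `u`-uncontestable if no unoffered good has a lobby of at least `u` agents. -/
def UUncontestable (P : MenuProblem N G) (O : Finset G) (u : ℕ) : Prop :=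
  ∀ j ∉ O, P.lobby O j < u

/-- A menu is `(t,u)`-stable if it is `t`-feasible and `u`-uncontestable. -/
def Stable (P : MenuProblem N G) (O : Finset G) (t u : ℕ) : Prop :=
  P.TFeasible O t ∧ P.UUncontestable O u

end MenuProblem

/-!
Adding `j` to `A` leaves at most one good `k` off the menu `C = A ∪ {j}`. At least
`u - (t - 1) ≥ t` agents take `j` from `C` but not from `B ∋ j`. By independence of irrelevant
alternatives such an agent's top good is neither in `C` (else it would take that good from `C`)
nor outside `B` (else `B ⊆ C` and it would take `j` from `B`); so it is the unique good `k ∉ C`,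
which lies in `B`.
-/

namespace MenuProblem

variable {N G : Type} [DecidableEq G] (P : MenuProblem N G)

theorem mem_pref_of_assigned_eq_some {O : Finset G} {i : N} {j : G}
    (h : P.assigned O i = some j) : j ∈ P.pref i :=
  List.mem_of_find?_eq_some h

theorem assigned_univ [Fintype G] (i : N) : P.assigned Finset.univ i = (P.pref i).head? := by
  unfold assigned
  cases P.pref i <;> simp

theorem assigned_of_subset {O O' : Finset G} {i : N} {k : G} (h : P.assigned O i = some k)
    (hk : k ∈ O') (hO : O' ⊆ O) : P.assigned O' i = some k := by
  obtain ⟨-, as, bs, hpref, has⟩ := List.find?_eq_some_iff_append.1 h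
  refine List.find?_eq_some_iff_append.2 ⟨decide_eq_true hk, as, bs, hpref, fun a ha => ?_⟩
  have : a ∉ O := by simpa using has a ha
  simpa using fun haO' => this (hO haO')

theorem exists_head?_eq_mem_sdiff [Fintype G] {B C : Finset G} (hC : Cᶜ.card ≤ 1) {i : N}
    {j : G} (hjC : P.assigned C i = some j) (hjB : j ∈ B) (hBj : P.assigned B i ≠ some j) :
    ∃ k ∈ B \ C, (P.pref i).head? = some k := by
  obtain ⟨k, hk⟩ := Option.isSome_iff_exists.1 <|
    List.isSome_head?.2 (List.ne_nil_of_mem (P.mem_pref_of_assigned_eq_some hjC))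
  rw [← P.assigned_univ] at hk
  have hkC : k ∉ C := by
    intro hkC
    have hkj : k = j := Option.some_injective _ <|
      (P.assigned_of_subset hk hkC (Finset.subset_univ C)).symm.trans hjC
    subst hkj
    exact hBj (P.assigned_of_subset hk hjB (Finset.subset_univ B))
  have hkB : k ∈ B := by
    by_contra hkB
    have hBC : B ⊆ C := fun b hb => by
      by_contra hbC
      have hbk : b = k := Finset.card_le_one.1 hC b (Finset.mem_compl.2 hbC) k
        (Finset.mem_compl.2 hkC)
      exact hkB (hbk ▸ hb)
    exact hBj (P.assigned_of_subset hjC hjB hBC)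
  exact ⟨k, Finset.mem_sdiff.2 ⟨hkB, hkC⟩, P.assigned_univ i ▸ hk⟩

end MenuProblem

open Finset in
/-- Cycle menus have size at most `g − 2`: if `u ≥ 2t − 1`, good `j` has a lobby of at
least `u` against a menu `A` with `|A| ≥ g − 2`, `j ∉ A`, while `j` receives fewer than
`t` agents in a menu `B ∋ j`, then some good `k ∈ B ∖ A`, `k ≠ j`, is ranked first by at
least `t` agents. -/
theorem cycle_menu_card_le (n g t u : ℕ) (P : MenuProblem (Fin n) (Fin g))
    (htu : 2 * t - 1 ≤ u) (A B : Finset (Fin g)) (j : Fin g)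
    (hjA : j ∉ A) (hA : g - 2 ≤ A.card)
    (hadd : u ≤ P.lobby A j) (hjB : j ∈ B) (hrem : P.assignedCount B j < t) :
    ∃ k, k ∈ B ∧ k ∉ A ∧ k ≠ j ∧
      t ≤ (Finset.univ.filter (fun i => (P.pref i).head? = some k)).card := by
  set C := insert j A
  have hC : #Cᶜ ≤ 1 := by
    rw [card_compl, Fintype.card_fin, card_insert_of_notMem hjA]
    omega
  set S := univ.filter (fun i => P.assigned C i = some j) \
    univ.filter (fun i => P.assigned B i = some j)
  have hS : t ≤ #S := by
    have hSu : u ≤ #(univ.filter fun i => P.assigned C i = some j) := hadd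
    have hSb : #(univ.filter fun i => P.assigned B i = some j) < t := hrem
    calc t ≤ #(univ.filter fun i => P.assigned C i = some j) -
          #(univ.filter fun i => P.assigned B i = some j) := by omega
      _ ≤ #S := le_card_sdiff _ _
  have head_of_mem_S : ∀ i ∈ S, ∃ k ∈ B \ C, (P.pref i).head? = some k := fun i hi => by
    simp only [S, mem_sdiff, mem_filter, mem_univ, true_and] at hi
    exact P.exists_head?_eq_mem_sdiff hC hi.1 hjB hi.2
  obtain ⟨i₀, hi₀⟩ := card_pos.1 (by omega : 0 < #S)
  obtain ⟨k, hk, -⟩ := head_of_mem_S i₀ hi₀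
  obtain ⟨hkB, hkC⟩ := mem_sdiff.1 hk
  obtain ⟨hkj, hkA⟩ := not_or.1 (mem_insert.not.1 hkC)
  refine ⟨k, hkB, hkA, hkj, hS.trans (card_le_card fun i hi => ?_)⟩
  obtain ⟨k', hk', hhead⟩ := head_of_mem_S i hi
  have hk'k : k' = k := card_le_one.1 hC k' (mem_compl.2 (mem_sdiff.1 hk').2) k (mem_compl.2 hkC)
  simpa [hk'k] using hhead
end

section
/- (No (1,2)-gaps) Fix g ≥ 2 and t, u ∈ ℕ with u ≥ 2t − 1. For every menu selection problem with g public goods, at least one of the following holds: (1) some singleton menu {j} is u-uncontestable, or (2) some two-element menu {i, j} is t-feasible. -/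
/-!
Write `a ▷ b` for `t ≤ |a ≻ b|`. An agent who takes `a` from `{a, b}` takes `a` from `{a, k}`
unless it takes `k` from `{k, b}`, so `|a ≻ b| ≤ |a ≻ k| + |k ≻ b|`; with `u ≥ 2t − 1` this gives
`|a ≻ k| ≥ t` whenever `|a ≻ b| ≥ u` and `|k ≻ b| < t`.
If no singleton is `u`-uncontestable, every good `j` has a challenger `f j` with
`|f j ≻ j| ≥ u ≥ t`; if moreover no pair is `t`-feasible, `▷` is asymmetric and hence
`a ▷ b` implies `f a ▷ b`. Along the orbit `x, f x, f (f x), …` every good then beats all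
earlier ones; the orbit revisits some `x i`, and `x (i + 1)` and `x i` beat each other.
-/

theorem exists_ne_rel_and_rel_of_forall_rel_apply {α : Type*} [Finite α] [Nonempty α]
    (R : α → α → Prop) (f : α → α) (hf_ne : ∀ a, f a ≠ a) (hf : ∀ a, R (f a) a)
    (hstep : ∀ a b, R a b → ¬ R b a → R (f a) b) :
    ∃ a b, a ≠ b ∧ R a b ∧ R b a := by
  by_contra! hasymm
  have step (a b : α) (hab : R a b) : R (f a) b := by
    rcases eq_or_ne a b with rfl | hne
    · exact hf a
    · exact hstep a b hab (hasymm a b hne hab)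
  obtain ⟨x₀⟩ := ‹Nonempty α›
  set x : ℕ → α := fun n => f^[n] x₀
  have hx_succ (n : ℕ) : x (n + 1) = f (x n) := Function.iterate_succ_apply' f n x₀
  have hx_rel (m n : ℕ) (hmn : m < n) : R (x n) (x m) := by
    induction n, hmn using Nat.le_induction with
    | base => exact hx_succ m ▸ hf (x m)
    | succ n _ ih => exact hx_succ n ▸ step _ _ ih
  obtain ⟨i, j, hij, hx_eq⟩ : ∃ i j, i < j ∧ x i = x j := by
    obtain ⟨i, j, hne, heq⟩ := Finite.exists_ne_map_eq_of_infinite x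
    rcases hne.lt_or_gt with h | h
    exacts [⟨i, j, h, heq⟩, ⟨j, i, h, heq.symm⟩]
  have hne : x (i + 1) ≠ x i := hx_succ i ▸ hf_ne (x i)
  rcases (Nat.succ_le_of_lt hij).lt_or_eq with hlt | rfl
  · exact hasymm _ _ hne (hx_rel i (i + 1) i.lt_succ_self) (hx_eq ▸ hx_rel (i + 1) j hlt)
  · exact hne hx_eq.symm

theorem List.find?_mem_pair_eq_some_trans {G : Type*} [DecidableEq G] {a b k : G}
    (hab : a ≠ b) {l : List G}
    (h_ab : l.find? (fun x => decide (x ∈ ({a, b} : Finset G))) = some a)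
    (h_kb : l.find? (fun x => decide (x ∈ ({k, b} : Finset G))) ≠ some k) :
    l.find? (fun x => decide (x ∈ ({a, k} : Finset G))) = some a := by
  induction l with
  | nil => simp at h_ab
  | cons x xs ih =>
    by_cases hxa : x = a
    · simp [hxa]
    by_cases hxb : x = b
    · simp [hxb, hab.symm] at h_ab
    by_cases hxk : x = k
    · simp [hxk] at h_kb
    rw [List.find?_cons_of_neg (by simp [hxa, hxb])] at h_ab
    rw [List.find?_cons_of_neg (by simp [hxk, hxb])] at h_kb
    rw [List.find?_cons_of_neg (by simp [hxa, hxk])]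
    exact ih h_ab h_kb

namespace MenuProblem

variable {N G : Type} [Fintype N] [DecidableEq G]

theorem prefCount_le_prefCount_add_prefCount (P : MenuProblem N G) {a b k : G}
    (hab : a ≠ b) :
    P.prefCount a b ≤ P.prefCount a k + P.prefCount k b := by
  classical
  unfold prefCount assignedCount
  refine (Finset.card_le_card fun i hi => ?_).trans (Finset.card_union_le _ _)
  simp only [Finset.mem_union, Finset.mem_filter, Finset.mem_univ, true_and] at hi ⊢
  by_cases h_kb : P.assigned {k, b} i = some k
  · exact Or.inr h_kb
  · exact Or.inl (List.find?_mem_pair_eq_some_trans hab hi h_kb)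

theorem le_prefCount_of_lt_prefCount {P : MenuProblem N G} {t u : ℕ} (htu : 2 * t - 1 ≤ u)
    {a b k : G} (hab : a ≠ b) (h_ab : u ≤ P.prefCount a b)
    (h_kb : P.prefCount k b < t) : t ≤ P.prefCount a k := by
  have := P.prefCount_le_prefCount_add_prefCount (k := k) hab
  omega

theorem uUncontestable_singleton_iff (P : MenuProblem N G) (j : G) (u : ℕ) :
    P.UUncontestable {j} u ↔ ∀ k ≠ j, P.prefCount k j < u := by
  simp only [UUncontestable, Finset.mem_singleton]
  rfl

theorem tFeasible_pair (P : MenuProblem N G) {a b : G} {t : ℕ} (h_ab : t ≤ P.prefCount a b)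
    (h_ba : t ≤ P.prefCount b a) : P.TFeasible {a, b} t := by
  intro j hj
  rcases Finset.mem_insert.1 hj with rfl | hj
  · exact h_ab
  · rw [Finset.mem_singleton.1 hj, Finset.pair_comm]
    exact h_ba

end MenuProblem

open MenuProblem in
/-- No (1,2)-gaps: for `g ≥ 2` and `u ≥ 2t − 1`, in every menu selection problem with `g`
goods, either some singleton menu is `u`-uncontestable, or some two-element menu is
`t`-feasible. -/
theorem no_one_two_gaps (g t u n : ℕ) (hg : 2 ≤ g) (htu : 2 * t - 1 ≤ u)
    (P : MenuProblem (Fin n) (Fin g)) :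
    (∃ j : Fin g, P.UUncontestable {j} u) ∨
    (∃ i j : Fin g, i ≠ j ∧ P.TFeasible {i, j} t) := by
  refine or_iff_not_imp_left.2 fun h_contested => ?_
  simp only [uUncontestable_singleton_iff, not_exists, not_forall, not_lt] at h_contested
  choose f hf_ne hf_ge using h_contested
  have : Nonempty (Fin g) := ⟨⟨0, by omega⟩⟩
  obtain ⟨a, b, hab, h_ab, h_ba⟩ := exists_ne_rel_and_rel_of_forall_rel_apply
    (fun a b => t ≤ P.prefCount a b) f hf_ne (fun a => (by omega : t ≤ u).trans (hf_ge a))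
    fun a b h_ab h_ba => le_prefCount_of_lt_prefCount htu (hf_ne a) (hf_ge a) (not_le.1 h_ba)
  exact ⟨a, b, hab, tFeasible_pair P h_ab h_ba⟩
end

section
/- For every g ≥ 4 and t, u ∈ ℕ with u − 1 ≥ (g − 2)(t − 1), every menu selection problem with g public goods has a (t,u)-stable menu. -/
/-!
Deleting, one at a time, goods that get fewer than `t` agents (but never a protected good) ends
in a menu on which every unprotected good is `t`-feasible. Each deletion moves fewer than `t`
agents, so a good deleted while `k` more deletions follow has lobby at most `(k + 1)(t - 1)` against
the final menu. Starting from the goods ranked by at least `t` agents, this yields a stable menu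
unless it ends in a singleton `{a}` contested only by the first deleted good `j`. Then `{a, j}` is
stable if at least `t` agents prefer `a` to `j`. Otherwise rerun the deletion on the ranked goods
other than `a`, protecting `j`, and finally drop `j` if it is still short: the lobby of `a` is then
at most `2(t - 1)` and every other lobby at most `(g - 2)(t - 1)`.
-/

open Finset

namespace MenuProblem

variable {N G : Type} [DecidableEq G] (P : MenuProblem N G)

lemma assigned_eq_some_of_subset {O O' : Finset G} (hO : O ⊆ O') {x : G} (hx : x ∈ O) {i : N}
    (hi : P.assigned O' i = some x) : P.assigned O i = some x := by
  unfold assigned at *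
  generalize P.pref i = l at hi ⊢
  induction l with
  | nil => simp at hi
  | cons a l ih =>
    by_cases haO' : a ∈ O'
    · rw [List.find?_cons_of_pos (by simpa using haO'), Option.some.injEq] at hi
      subst hi
      exact List.find?_cons_of_pos (by simpa using hx)
    · have haO : a ∉ O := fun h => haO' (hO h)
      rw [List.find?_cons_of_neg (by simpa using haO')] at hi
      rw [List.find?_cons_of_neg (by simpa using haO)]
      exact ih hi

lemma assigned_insert (O : Finset G) (j : G) (i : N) :
    P.assigned (insert j O) i = some j ∨ P.assigned (insert j O) i = P.assigned O i := by
  unfold assigned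
  induction P.pref i with
  | nil => simp
  | cons a l ih =>
    by_cases haj : a = j
    · subst haj
      exact .inl (List.find?_cons_of_pos (by simp))
    by_cases haO : a ∈ O
    · refine .inr ?_
      rw [List.find?_cons_of_pos (by simp [haO]), List.find?_cons_of_pos (by simpa using haO)]
    · rw [List.find?_cons_of_neg (by simp [haj, haO]), List.find?_cons_of_neg (by simpa using haO)]
      exact ih

variable [Fintype N]

lemma assignedCount_le_of_subset {O O' : Finset G} (hO : O ⊆ O') {x : G} (hx : x ∈ O) :
    P.assignedCount O' x ≤ P.assignedCount O x :=
  card_le_card fun i hi =>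
    mem_filter.2 ⟨mem_univ i, P.assigned_eq_some_of_subset hO hx (mem_filter.1 hi).2⟩

lemma lobby_le_of_subset {O O' : Finset G} (hO : O ⊆ O') (x : G) :
    P.lobby O' x ≤ P.lobby O x :=
  P.assignedCount_le_of_subset (insert_subset_insert x hO) (mem_insert_self x O)

lemma lobby_lt_of_lobby_empty_lt {t : ℕ} {x : G} (hx : P.lobby ∅ x < t) (O : Finset G) :
    P.lobby O x < t :=
  (P.lobby_le_of_subset (empty_subset O) x).trans_lt hx

lemma lobby_empty (x : G) : P.lobby ∅ x = P.assignedCount {x} x := rfl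

/-- An agent lobbying for `x` against `O` either still takes `x` once `j` is added to `O`, or
takes `j` from `insert j O`. -/
lemma lobby_le_lobby_insert_add (O : Finset G) (x j : G) :
    P.lobby O x ≤ P.lobby (insert j O) x + P.lobby O j := by
  classical
  refine (card_le_card fun i hi => ?_).trans (card_union_le _ _)
  have hi : P.assigned (insert x O) i = some x := (mem_filter.1 hi).2
  rw [mem_union, mem_filter, mem_filter]
  rcases P.assigned_insert (insert x O) j i with hj | hx
  · exact .inr ⟨mem_univ i, P.assigned_eq_some_of_subset
      (insert_subset_insert j (subset_insert x O)) (mem_insert_self j O) hj⟩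
  · exact .inl ⟨mem_univ i, by rw [Finset.insert_comm, hx, hi]⟩

lemma lobby_erase_self {O : Finset G} {j : G} (hj : j ∈ O) :
    P.lobby (O.erase j) j = P.assignedCount O j := by
  rw [lobby, insert_erase hj]

lemma lobby_erase_le {O : Finset G} {j : G} (hj : j ∈ O) (x : G) :
    P.lobby (O.erase j) x ≤ P.lobby O x + P.assignedCount O j := by
  simpa only [insert_erase hj, P.lobby_erase_self hj] using
    P.lobby_le_lobby_insert_add (O.erase j) x j

def rankedGoods [Fintype G] (t : ℕ) : Finset G := univ.filter fun y => t ≤ P.lobby ∅ y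

@[simp]
lemma mem_rankedGoods [Fintype G] {t : ℕ} {y : G} :
    y ∈ P.rankedGoods t ↔ t ≤ P.lobby ∅ y := by
  simp [rankedGoods]

lemma uUncontestable_of_ranked {O : Finset G} {t u : ℕ} (htu : t ≤ u)
    (h : ∀ x ∉ O, t ≤ P.lobby ∅ x → P.lobby O x < u) : P.UUncontestable O u := fun x hx =>
  if hxt : t ≤ P.lobby ∅ x then h x hx hxt
  else (P.lobby_lt_of_lobby_empty_lt (not_le.1 hxt) O).trans_le htu

inductive Reduces (t : ℕ) (S : Finset G) : Finset G → Finset G → Prop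
  | refl (M : Finset G) : Reduces t S M M
  | step {M F : Finset G} (x : G) : x ∈ M → x ∉ S → P.assignedCount M x < t →
      Reduces t S (M.erase x) F → Reduces t S M F

lemma exists_reduces (t : ℕ) (S M : Finset G) :
    ∃ F, P.Reduces t S M F ∧ ∀ x ∈ F, x ∉ S → t ≤ P.assignedCount F x := by
  induction M using Finset.strongInduction with
  | H M ih =>
    by_cases hM : ∀ x ∈ M, x ∉ S → t ≤ P.assignedCount M x
    · exact ⟨M, .refl M, hM⟩
    obtain ⟨x, hxM, hxS, hx⟩ : ∃ x ∈ M, x ∉ S ∧ P.assignedCount M x < t := by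
      simpa using hM
    obtain ⟨F, hred, hF⟩ := ih _ (erase_ssubset hxM)
    exact ⟨F, .step x hxM hxS hx hred, hF⟩

lemma card_sub_card_eq_card_erase_sub_card_add_one {M F : Finset G} {y : G} (hy : y ∈ M)
    (hF : F ⊆ M.erase y) : #M - #F = #(M.erase y) - #F + 1 := by
  have := card_le_card hF
  have := card_erase_add_one hy
  omega

namespace Reduces

variable {P} {t : ℕ} {S M F : Finset G}

lemma subset (h : P.Reduces t S M F) : F ⊆ M := by
  induction h with
  | refl => exact subset_rfl
  | step x _ _ _ _ ih => exact ih.trans (erase_subset x _)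

lemma mem_of_mem (h : P.Reduces t S M F) {x : G} (hxS : x ∈ S) (hxM : x ∈ M) : x ∈ F := by
  induction h with
  | refl => exact hxM
  | step y _ hyS _ _ ih => exact ih (mem_erase.2 ⟨fun hxy => hyS (hxy ▸ hxS), hxM⟩)

lemma nonempty (h : P.Reduces t S M F) (hM : ∀ y ∈ M, t ≤ P.lobby ∅ y) (hne : M.Nonempty) :
    F.Nonempty := by
  induction h with
  | refl => exact hne
  | @step M F y hyM _ hy _ ih =>
    rcases (M.erase y).eq_empty_or_nonempty with he | he
    · have hMy : M = {y} := ((erase_eq_empty_iff M y).1 he).resolve_left hne.ne_empty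
      subst hMy
      exact absurd (hM y hyM) (not_le.2 hy)
    · exact ih (fun z hz => hM z (mem_of_mem_erase hz)) he

lemma lobby_le_of_notMem (h : P.Reduces t S M F) {x : G} (hx : x ∉ M) :
    P.lobby F x ≤ P.lobby M x + (#M - #F) * (t - 1) := by
  induction h with
  | refl => simp
  | @step M F y hyM _ hy hred ih =>
    have hcard := card_sub_card_eq_card_erase_sub_card_add_one hyM hred.subset
    have hlobby := P.lobby_erase_le hyM x
    calc P.lobby F x ≤ P.lobby (M.erase y) x + (#(M.erase y) - #F) * (t - 1) :=
          ih fun hxy => hx (mem_of_mem_erase hxy)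
      _ ≤ P.lobby M x + (#M - #F) * (t - 1) := by
          rw [hcard, add_one_mul]
          omega

lemma lobby_le_of_mem (h : P.Reduces t S M F) {x : G} (hxM : x ∈ M) (hxF : x ∉ F) :
    P.lobby F x ≤ (#M - #F) * (t - 1) := by
  induction h with
  | refl => exact absurd hxM hxF
  | @step M F y hyM _ hy hred ih =>
    have hcard := card_sub_card_eq_card_erase_sub_card_add_one hyM hred.subset
    rcases eq_or_ne x y with rfl | hxy
    · have hlobby := hred.lobby_le_of_notMem (notMem_erase x M)
      rw [P.lobby_erase_self hyM] at hlobby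
      rw [hcard, add_one_mul]
      omega
    · exact (ih (mem_erase.2 ⟨hxy, hxM⟩) hxF).trans (Nat.mul_le_mul_right _ (by omega))

end Reduces

lemma two_mul_pred_lt {g t u : ℕ} (hg : 4 ≤ g) (hu : (g - 2) * (t - 1) < u) : 2 * (t - 1) < u :=
  (Nat.mul_le_mul_right _ (by omega)).trans_lt hu

variable {t u : ℕ}

lemma stable_pair {a j : G} (ha : t ≤ P.prefCount a j) (hj : t ≤ P.lobby {a} j)
    (hrest : ∀ x ∉ ({a, j} : Finset G), P.lobby {a} x < u) : P.Stable {a, j} t u := by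
  have hsub : ({a} : Finset G) ⊆ {a, j} := singleton_subset_iff.2 (mem_insert_self a {j})
  refine ⟨fun x hx => ?_, fun x hx => (P.lobby_le_of_subset hsub x).trans_lt (hrest x hx)⟩
  rcases mem_insert.1 hx with rfl | hx
  · exact ha
  · rw [mem_singleton.1 hx, pair_comm]
    exact hj

variable [Fintype G]

lemma exists_stable_or_singleton_with_contender (hg : 4 ≤ Fintype.card G)
    (hu : (Fintype.card G - 2) * (t - 1) < u) :
    (∃ O, P.Stable O t u) ∨
      ∃ a j, t ≤ P.lobby {a} j ∧ ∀ x ∉ ({a, j} : Finset G), P.lobby {a} x < u := by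
  have htu : t ≤ u := by have := two_mul_pred_lt hg hu; omega
  obtain ⟨R, hR⟩ : ∃ R : Finset G, ∀ y, y ∈ R ↔ t ≤ P.lobby ∅ y :=
    ⟨P.rankedGoods t, fun _ => P.mem_rankedGoods⟩
  obtain ⟨F, hchain, hF⟩ := P.exists_reduces t ∅ R
  have hfeas : P.TFeasible F t := fun x hx => hF x hx (notMem_empty x)
  rcases hchain with _ | ⟨j, hjR, hjS, hj, hred⟩
  · exact .inl ⟨R, hfeas, P.uUncontestable_of_ranked htu fun x hx hxt =>
      absurd ((hR x).2 hxt) hx⟩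
  have hchain : P.Reduces t ∅ R F := .step j hjR hjS hj hred
  have hFne : F.Nonempty := hchain.nonempty (fun y => (hR y).1) ⟨j, hjR⟩
  have hjF : j ∉ F := fun h => notMem_erase j R (hred.subset h)
  have hother : ∀ x ∉ F, x ≠ j → P.lobby F x < u := by
    intro x hxF hxj
    by_cases hxt : t ≤ P.lobby ∅ x
    · have hcard : #(R.erase j) - #F ≤ Fintype.card G - 2 := by
        have := card_lt_univ_of_notMem (notMem_erase j R)
        have := hFne.card_pos
        omega
      calc P.lobby F x ≤ (#(R.erase j) - #F) * (t - 1) :=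
            hred.lobby_le_of_mem (mem_erase.2 ⟨hxj, (hR x).2 hxt⟩) hxF
        _ ≤ (Fintype.card G - 2) * (t - 1) := Nat.mul_le_mul_right _ hcard
        _ < u := hu
    · exact (P.lobby_lt_of_lobby_empty_lt (not_le.1 hxt) F).trans_le htu
  by_cases hju : P.lobby F j < u
  · exact .inl ⟨F, hfeas, fun x hx => (eq_or_ne x j).elim (· ▸ hju) (hother x hx)⟩
  have hFcard : #F = 1 := by
    have hbound := hchain.lobby_le_of_mem hjR hjF
    have : Fintype.card G - 2 < #R - #F :=
      Nat.lt_of_mul_lt_mul_right (hu.trans_le ((not_lt.1 hju).trans hbound))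
    have := card_le_univ R
    have := hFne.card_pos
    omega
  obtain ⟨a, rfl⟩ := card_eq_one.1 hFcard
  refine .inr ⟨a, j, htu.trans (not_lt.1 hju), fun x hx => ?_⟩
  rw [mem_insert, mem_singleton, not_or] at hx
  exact hother x (notMem_singleton.2 hx.1) hx.2

lemma exists_stable_of_feasible_except (hg : 4 ≤ Fintype.card G)
    (hu : (Fintype.card G - 2) * (t - 1) < u) {a j : G} {F : Finset G} (hjF : j ∈ F)
    (hF : ∀ x ∈ F, x ≠ j → t ≤ P.assignedCount F x) (hj : t ≤ P.lobby ∅ j)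
    (hFa : P.lobby F a < t) (hremoved : ∀ x ∉ F, x ≠ a → t ≤ P.lobby ∅ x →
      P.lobby F x ≤ (Fintype.card G - 1 - #F) * (t - 1)) :
    ∃ O, P.Stable O t u := by
  have h2u : 2 * (t - 1) < u := two_mul_pred_lt hg hu
  have htu : t ≤ u := by omega
  by_cases hjt : t ≤ P.assignedCount F j
  · refine ⟨F, fun x hx => ?_, P.uUncontestable_of_ranked htu fun x hx hxt => ?_⟩
    · rcases eq_or_ne x j with rfl | hxj
      · exact hjt
      · exact hF x hx hxj
    · rcases eq_or_ne x a with rfl | hxa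
      · exact hFa.trans_le htu
      · calc P.lobby F x ≤ (Fintype.card G - 1 - #F) * (t - 1) := hremoved x hx hxa hxt
          _ ≤ (Fintype.card G - 2) * (t - 1) :=
            Nat.mul_le_mul_right _ (by have := card_pos.2 ⟨j, hjF⟩; omega)
          _ < u := hu
  have hF2 : 2 ≤ #F := by
    by_contra hlt
    have hFj : {j} = F :=
      eq_of_subset_of_card_le (singleton_subset_iff.2 hjF) (by rw [card_singleton]; omega)
    rw [← hFj, ← lobby_empty] at hjt
    omega
  refine ⟨F.erase j, fun x hx => ?_, P.uUncontestable_of_ranked htu fun x hx hxt => ?_⟩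
  · exact (hF x (mem_of_mem_erase hx) (ne_of_mem_erase hx)).trans
      (P.assignedCount_le_of_subset (erase_subset j F) hx)
  have hsplit := P.lobby_erase_le hjF x
  rcases eq_or_ne x j with rfl | hxj
  · rw [P.lobby_erase_self hjF]
    omega
  have hxF : x ∉ F := fun h => hx (mem_erase.2 ⟨hxj, h⟩)
  rcases eq_or_ne x a with rfl | hxa
  · omega
  · calc P.lobby (F.erase j) x ≤ (Fintype.card G - 1 - #F) * (t - 1) + (t - 1) := by
          have := hremoved x hxF hxa hxt
          omega
      _ = (Fintype.card G - 1 - #F + 1) * (t - 1) := (add_one_mul _ _).symm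
      _ ≤ (Fintype.card G - 2) * (t - 1) := Nat.mul_le_mul_right _ (by omega)
      _ < u := hu

lemma exists_stable_of_prefCount_lt (hg : 4 ≤ Fintype.card G)
    (hu : (Fintype.card G - 2) * (t - 1) < u) {a j : G} (hj : t ≤ P.lobby ∅ j)
    (haj : P.prefCount a j < t) : ∃ O, P.Stable O t u := by
  have hja : j ≠ a := by
    rintro rfl
    have : P.prefCount j j = P.lobby ∅ j := by simp [prefCount, lobby]
    omega
  obtain ⟨F, hred, hF⟩ := P.exists_reduces t {j} ((P.rankedGoods t).erase a)
  have hjF : j ∈ F :=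
    hred.mem_of_mem (mem_singleton_self j) (mem_erase.2 ⟨hja, P.mem_rankedGoods.2 hj⟩)
  refine P.exists_stable_of_feasible_except hg hu hjF
    (fun x hx hxj => hF x hx (notMem_singleton.2 hxj)) hj
    ((P.lobby_le_of_subset (singleton_subset_iff.2 hjF) a).trans_lt haj)
    fun x hx hxa hxt => ?_
  have hcard : #((P.rankedGoods t).erase a) ≤ Fintype.card G - 1 := by
    have := card_lt_univ_of_notMem (notMem_erase a (P.rankedGoods t))
    omega
  exact (hred.lobby_le_of_mem (mem_erase.2 ⟨hxa, P.mem_rankedGoods.2 hxt⟩) hx).trans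
    (Nat.mul_le_mul_right _ (by omega))

end MenuProblem

/-- For every `g ≥ 4` and `t, u ∈ ℕ` with `u − 1 ≥ (g − 2)(t − 1)`, every menu selection
problem with `g` public goods has a `(t,u)`-stable menu. -/
theorem upper_bound_g_minus_two (g t u : ℕ) (hg : 4 ≤ g) (hu : 1 ≤ u)
    (h : (g - 2) * (t - 1) ≤ u - 1) (n : ℕ) (P : MenuProblem (Fin n) (Fin g)) :
    ∃ O : Finset (Fin g), P.Stable O t u := by
  have hg' : 4 ≤ Fintype.card (Fin g) := by rwa [Fintype.card_fin]
  have hu' : (Fintype.card (Fin g) - 2) * (t - 1) < u := by rw [Fintype.card_fin]; omega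
  obtain hO | ⟨a, j, hj, hrest⟩ := P.exists_stable_or_singleton_with_contender hg' hu'
  · exact hO
  by_cases hpair : t ≤ P.prefCount a j
  · exact ⟨{a, j}, P.stable_pair hpair hj hrest⟩
  · exact P.exists_stable_of_prefCount_lt hg' hu'
      (hj.trans (P.lobby_le_of_subset (empty_subset _) j)) (not_le.1 hpair)
end

section
/- (Structural upper bound) Let g ≥ 5, t ≥ 2, and u ≥ (g − 1 − ε)(t − 1) with 0 ≤ ε < 1/6. Then every menu selection problem with g public goods has a (t,u)-stable menu. -/
/-!
If some good keeps `t` supporters even when every good is offered, drop under-supported goods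
until the menu `M` is `t`-feasible. Everything outside `M` is then weak (fewer than `t`
supporters with every good offered), and an agent lobbying for an outside good has its overall
favourite outside `M`, so lobbies have at most `(g - |M|)(t - 1) < u` members once `|M| ≥ 2`;
if only the strong good is left, it is paired with its challenger.

If every good is weak, at most `g (t - 1)` agents rank anything. If no menu were stable, every
singleton with `u` supporters would be challenged by another one with a lobby of `u`, giving a
cycle `c 0, …, c m = c 0` in which each good beats its predecessor head to head by `u` agents.
No agent follows all `m` comparisons, and counting the missed ones shows that all but few agents
miss exactly one. Cutting the cycle at the first `q` such that `t` of these regular agents miss a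
step before `q` leaves at least `t` missing a later step; the former prefer `c 0` to `c q` and
the latter `c q` to `c 0`, so `{c 0, c q}` is stable.
-/

theorem lt_of_forall_Ico_succ_lt {β : Type*} [Preorder β] {f : ℕ → β} {a b : ℕ}
    (h : ∀ k, a ≤ k → k < b → f (k + 1) < f k) (hab : a < b) : f b < f a := by
  induction b, hab using Nat.le_induction with
  | base => exact h a le_rfl (Nat.lt_succ_self a)
  | succ b hab ih =>
    exact (h b (by omega) (Nat.lt_succ_self b)).trans (ih fun k hak hkb => h k hak (by omega))

theorem Function.exists_mem_periodicPts {α : Type*} [Finite α] [Nonempty α] (f : α → α) :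
    ∃ x, x ∈ Function.periodicPts f := by
  obtain ⟨a⟩ := ‹Nonempty α›
  obtain ⟨i, j, hij, hlt⟩ : ∃ i j, f^[i] a = f^[j] a ∧ i < j := by
    obtain ⟨i, j, hij, hne⟩ : ∃ i j, f^[i] a = f^[j] a ∧ i ≠ j := by
      simpa [Function.Injective] using not_injective_infinite_finite (f^[·] a)
    rcases hne.lt_or_gt with h | h
    exacts [⟨i, j, hij, h⟩, ⟨j, i, hij.symm, h⟩]
  refine ⟨f^[i] a, Function.mk_mem_periodicPts (Nat.sub_pos_of_lt hlt) ?_⟩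
  rw [Function.IsPeriodicPt, Function.IsFixedPt, ← Function.iterate_add_apply,
    Nat.sub_add_cancel hlt.le, hij]

theorem List.find?_mem_eq_some_iff {α : Type*} [DecidableEq α] (l : List α) (O : Finset α)
    (j : α) :
    l.find? (· ∈ O) = some j ↔ j ∈ O ∧ j ∈ l ∧ ∀ y ∈ O, l.idxOf j ≤ l.idxOf y := by
  induction l with
  | nil => simp
  | cons a l ih =>
    by_cases ha : a ∈ O
    · rw [List.find?_cons_of_pos (p := fun x => decide (x ∈ O)) (by simpa using ha),
        Option.some.injEq]
      constructor
      · rintro rfl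
        simp [ha]
      · rintro ⟨-, -, hmin⟩
        by_contra haj
        simpa [List.idxOf_cons_eq, List.idxOf_cons_ne _ haj] using hmin a ha
    · have hne : ∀ y ∈ O, a ≠ y := fun y hy h => ha (h ▸ hy)
      rw [List.find?_cons_of_neg (p := fun x => decide (x ∈ O)) (by simpa using ha), ih]
      constructor
      · rintro ⟨hj, hjl, hmin⟩
        refine ⟨hj, List.mem_cons_of_mem _ hjl, fun y hy => ?_⟩
        simpa [List.idxOf_cons_ne _ (hne j hj), List.idxOf_cons_ne _ (hne y hy)] using hmin y hy
      · rintro ⟨hj, hjl, hmin⟩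
        refine ⟨hj, (List.mem_cons.1 hjl).resolve_left (hne j hj).symm, fun y hy => ?_⟩
        simpa [List.idxOf_cons_ne _ (hne j hj), List.idxOf_cons_ne _ (hne y hy)] using hmin y hy

namespace Finset

variable {α : Type*}

theorem card_add_card_filter_ne_one_le_sum (s : Finset α) (h : α → ℕ)
    (hpos : ∀ x ∈ s, 0 < h x) : s.card + (s.filter (h · ≠ 1)).card ≤ ∑ x ∈ s, h x := by
  rw [card_eq_sum_ones, card_filter, ← sum_add_distrib]
  refine sum_le_sum fun x hx => ?_
  have := hpos x hx
  split_ifs <;> omega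

theorem sum_card_filter_add_mul_le (R : Finset α) (r : α → ℕ → Prop)
    [∀ x i, Decidable (r x i)] {m u : ℕ} (hu : ∀ i < m, u ≤ (R.filter (¬ r · i)).card) :
    ∑ x ∈ R, ((range m).filter (r x ·)).card + m * u ≤ m * R.card := by
  have hswap : ∑ x ∈ R, ((range m).filter (r x ·)).card =
      ∑ i ∈ range m, (R.filter (r · i)).card := by
    simp only [card_filter]
    exact sum_comm
  calc ∑ x ∈ R, ((range m).filter (r x ·)).card + m * u
      = ∑ i ∈ range m, ((R.filter (r · i)).card + u) := by
        rw [hswap, sum_add_distrib, sum_const, card_range, smul_eq_mul]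
    _ ≤ ∑ _i ∈ range m, R.card := sum_le_sum fun i hi => by
        have := card_filter_add_card_filter_not (s := R) (p := (r · i))
        have := hu i (mem_range.1 hi)
        omega
    _ = m * R.card := by rw [sum_const, card_range, smul_eq_mul]

theorem exists_le_card_filter_lt_and_le_card_filter_le (s : Finset α) (f : α → ℕ) {t B : ℕ}
    (hB : ∀ k, (s.filter (f · = k)).card ≤ B) (hs : 2 * t + B ≤ s.card + 1) :
    ∃ q, t ≤ (s.filter (f · < q)).card ∧ t ≤ (s.filter (q ≤ f ·)).card := by
  classical
  have hex : ∃ q, t ≤ (s.filter (f · < q)).card := by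
    refine ⟨s.sup f + 1, ?_⟩
    rw [filter_true_of_mem fun x hx => Nat.lt_succ_of_le (le_sup hx)]
    omega
  obtain ⟨q, hq, hmin⟩ : ∃ q, t ≤ (s.filter (f · < q)).card ∧
      ∀ q' < q, (s.filter (f · < q')).card < t :=
    ⟨Nat.find hex, Nat.find_spec hex, fun q' h => not_le.1 (Nat.find_min hex h)⟩
  refine ⟨q, hq, ?_⟩
  have hsplit := card_filter_add_card_filter_not (s := s) (p := (f · < q))
  simp only [not_lt] at hsplit
  rcases q with _ | q
  · simp only [Nat.not_lt_zero, filter_false, card_empty] at hq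
    omega
  · have hstep : (s.filter (f · < q + 1)).card ≤
        (s.filter (f · < q)).card + (s.filter (f · = q)).card := by
      refine (card_le_card fun x hx => ?_).trans (card_union_le _ _)
      simp only [mem_union, mem_filter] at hx ⊢
      exact (Nat.lt_succ_iff_lt_or_eq.1 hx.2).imp (⟨hx.1, ·⟩) (⟨hx.1, ·⟩)
    have := hmin q (Nat.lt_succ_self q)
    have := hB q
    omega

end Finset

theorem le_and_sub_two_mul_lt_of_mul_lt {g t u : ℕ} (hg : 5 ≤ g)
    (hu : (6 * g - 7) * (t - 1) < 6 * u) : t ≤ u ∧ (g - 2) * (t - 1) < u := by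
  have h23 : 23 * (t - 1) ≤ (6 * g - 7) * (t - 1) := Nat.mul_le_mul_right _ (by omega)
  have h6 : 6 * ((g - 2) * (t - 1)) ≤ (6 * g - 7) * (t - 1) := by
    rw [← mul_assoc]
    exact Nat.mul_le_mul_right _ (by omega)
  omega

theorem add_two_mul_le_add_one {n x m g t u : ℕ} (hN : n ≤ g * (t - 1))
    (hkey : n + x + m * u ≤ m * n) (hm : m ≤ g) (hg : 5 ≤ g) (ht : 2 ≤ t)
    (hu : (6 * g - 7) * (t - 1) < 6 * u) : x + 2 * t ≤ u + 1 := by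
  obtain ⟨T, rfl⟩ : ∃ T, t = T + 1 := ⟨t - 1, by omega⟩
  obtain ⟨h, rfl⟩ : ∃ h, g = h + 5 := ⟨g - 5, by omega⟩
  simp only [Nat.add_sub_cancel] at hN hu
  rw [show 6 * (h + 5) - 7 = 6 * h + 23 by omega] at hu
  -- compare `m + 1` copies of `hu` with `m` copies of `hN`; the slack is
  -- `T (7 (h + 5 - m) + 5 h + 6) + m - 5 ≥ 0`
  nlinarith [Nat.mul_le_mul_left m hN, Nat.mul_le_mul_left (m + 1) hu]

namespace MenuProblem

variable {N G : Type} [DecidableEq G] (P : MenuProblem N G)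

/-- Goods that `i` does not rank get the length of the list, so they come after every
ranked good. -/
def rank (i : N) (a : G) : ℕ := (P.pref i).idxOf a

variable {P} {O O' : Finset G} {i : N} {a b j : G}

theorem assigned_eq_some_iff :
    P.assigned O i = some j ↔ j ∈ O ∧ j ∈ P.pref i ∧ ∀ y ∈ O, P.rank i j ≤ P.rank i y :=
  List.find?_mem_eq_some_iff _ _ _

theorem assigned_eq_some_of_subset_s19 (hO : O' ⊆ O) (h : P.assigned O i = some j) (hj : j ∈ O') :
    P.assigned O' i = some j := by
  rw [assigned_eq_some_iff] at h ⊢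
  exact ⟨hj, h.2.1, fun y hy => h.2.2 y (hO hy)⟩

theorem exists_assigned_eq_some (hj : j ∈ P.pref i) (hjO : j ∈ O) :
    ∃ w, P.assigned O i = some w :=
  Option.isSome_iff_exists.1 (List.find?_isSome.2 ⟨j, hj, by simpa using hjO⟩)

theorem mem_pref_of_rank_lt (h : P.rank i a < P.rank i b) : a ∈ P.pref i :=
  List.idxOf_lt_length_iff.1 (h.trans_le List.idxOf_le_length)

theorem assigned_pair_eq_some_iff (hab : a ≠ b) :
    P.assigned {a, b} i = some a ↔ P.rank i a < P.rank i b := by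
  rw [assigned_eq_some_iff]
  constructor
  · rintro ⟨-, ha, hmin⟩
    exact (hmin b (by simp)).lt_of_ne fun h => hab ((List.idxOf_inj ha).1 h)
  · intro h
    refine ⟨by simp, mem_pref_of_rank_lt h, ?_⟩
    simp only [Finset.mem_insert, Finset.mem_singleton, forall_eq_or_imp, forall_eq]
    exact ⟨le_rfl, h.le⟩

variable (P) in
/-- Agents with exactly one missed step are the paper's regular agents. -/
def misses (c : ℕ → G) (m : ℕ) (i : N) : Finset ℕ :=
  (Finset.range m).filter fun k => P.rank i (c k) ≤ P.rank i (c (k + 1))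

variable {c : ℕ → G} {m : ℕ}

theorem misses_nonempty (hm : 0 < m) (hcm : c m = c 0) (i : N) :
    (P.misses c m i).Nonempty := by
  by_contra h
  rw [Finset.not_nonempty_iff_eq_empty, misses, Finset.filter_eq_empty_iff] at h
  have := lt_of_forall_Ico_succ_lt (f := fun k => P.rank i (c k))
    (fun k _ hk => not_le.1 (h (Finset.mem_range.2 hk))) hm
  simp [hcm] at this

theorem rank_lt_of_misses_eq_singleton {k p q : ℕ} (hk : P.misses c m i = {k})
    (hpq : p < q) (hqm : q ≤ m) (hkpq : k < p ∨ q ≤ k) :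
    P.rank i (c q) < P.rank i (c p) :=
  lt_of_forall_Ico_succ_lt (f := fun j => P.rank i (c j)) (fun j hpj hjq => by
    have : j ∉ P.misses c m i := by
      rw [hk, Finset.mem_singleton]
      omega
    simpa [misses, hjq.trans_le hqm] using this) hpq

variable [Fintype N]

variable (P) in
def prefers (a b : G) : Finset N := Finset.univ.filter fun i => P.rank i a < P.rank i b

variable (P) in
def participants : Finset N := Finset.univ.filter fun i => P.pref i ≠ []

theorem prefers_subset_participants : P.prefers a b ⊆ P.participants := fun i hi => by
  simp only [prefers, participants, Finset.mem_filter, Finset.mem_univ, true_and] at hi ⊢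
  exact List.ne_nil_of_mem (mem_pref_of_rank_lt hi)

theorem prefCount_eq_card_prefers (hab : a ≠ b) : P.prefCount a b = (P.prefers a b).card := by
  simp only [prefCount, assignedCount, prefers, assigned_pair_eq_some_iff hab]

theorem assignedCount_le_of_subset_s19 (hO : O' ⊆ O) (hj : j ∈ O') :
    P.assignedCount O j ≤ P.assignedCount O' j :=
  Finset.card_le_card fun _ hi => by
    simp only [Finset.mem_filter, Finset.mem_univ, true_and] at hi ⊢
    exact assigned_eq_some_of_subset_s19 hO hi hj

theorem card_participants_add_card_irregular_le {u : ℕ} (hm : 0 < m)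
    (hcm : c m = c 0) (hc : ∀ k < m, u ≤ (P.prefers (c (k + 1)) (c k)).card) :
    P.participants.card +
        (P.participants.filter fun i => (P.misses c m i).card ≠ 1).card + m * u ≤
      m * P.participants.card := by
  have hsteps : ∀ k < m, u ≤ (P.participants.filter
      fun i => ¬ P.rank i (c k) ≤ P.rank i (c (k + 1))).card := fun k hk =>
    (hc k hk).trans <| Finset.card_le_card fun i hi => Finset.mem_filter.2
      ⟨prefers_subset_participants hi, not_le.2 (Finset.mem_filter.1 hi).2⟩
  have := Finset.card_add_card_filter_ne_one_le_sum P.participants (fun i => (P.misses c m i).card)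
    fun i _ => (misses_nonempty hm hcm i).card_pos
  have := Finset.sum_card_filter_add_mul_le P.participants _ hsteps
  unfold misses at *
  omega

theorem card_filter_misses_eq_singleton_add_le {u k : ℕ}
    (hc : u ≤ (P.prefers (c (k + 1)) (c k)).card) :
    (P.participants.filter (P.misses c m · = {k})).card + u ≤ P.participants.card := by
  classical
  have hsub : P.participants.filter (P.misses c m · = {k}) ⊆
      P.participants \ P.prefers (c (k + 1)) (c k) := fun i hi => by
    obtain ⟨hi, hmiss⟩ := Finset.mem_filter.1 hi
    have : k ∈ P.misses c m i := hmiss ▸ Finset.mem_singleton_self k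
    simp only [misses, Finset.mem_filter] at this
    exact Finset.mem_sdiff.2 ⟨hi, by simpa [prefers] using this.2⟩
  have := Finset.card_le_card hsub
  rw [Finset.card_sdiff_of_subset prefers_subset_participants] at this
  have := Finset.card_le_card (prefers_subset_participants (P := P) (a := c (k + 1)) (b := c k))
  omega

theorem exists_cut_of_cycle {g t u : ℕ} (hm : 0 < m) (hmg : m ≤ g)
    (hcm : c m = c 0) (hc : ∀ k < m, u ≤ (P.prefers (c (k + 1)) (c k)).card)
    (hN : P.participants.card ≤ g * (t - 1)) (hg : 5 ≤ g) (ht : 2 ≤ t)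
    (hu : (6 * g - 7) * (t - 1) < 6 * u) :
    ∃ q, t ≤ (P.participants.filter fun i => ∃ k < q, P.misses c m i = {k}).card ∧
      t ≤ (P.participants.filter fun i => ∃ k < m, q ≤ k ∧ P.misses c m i = {k}).card := by
  classical
  have hirr := add_two_mul_le_add_one hN (card_participants_add_card_irregular_le hm hcm hc)
    hmg hg ht hu
  have hsplit : (P.participants.filter fun i => (P.misses c m i).card = 1).card +
      (P.participants.filter fun i => (P.misses c m i).card ≠ 1).card = P.participants.card :=
    Finset.card_filter_add_card_filter_not _
  have huR : u ≤ P.participants.card :=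
    (hc 0 hm).trans (Finset.card_le_card prefers_subset_participants)
  set regular := P.participants.filter fun i => (P.misses c m i).card = 1
  let missed : N → ℕ := fun i => (P.misses c m i).min' (misses_nonempty hm hcm i)
  have hmissedm : ∀ i, missed i < m := fun i =>
    Finset.mem_range.1 (Finset.mem_filter.1 (Finset.min'_mem _ _)).1
  have hmissed : ∀ i ∈ regular, P.misses c m i = {missed i} := fun i hi => by
    obtain ⟨k, hk⟩ := Finset.card_eq_one.1 (Finset.mem_filter.1 hi).2
    simp only [missed, hk, Finset.min'_singleton]
  have hfiber : ∀ k, (regular.filter (missed · = k)).card ≤ P.participants.card - u := fun k => by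
    by_cases hk : k < m
    · have hsub : regular.filter (missed · = k) ⊆ P.participants.filter (P.misses c m · = {k}) :=
        fun i hi => by
          obtain ⟨hireg, rfl⟩ := Finset.mem_filter.1 hi
          exact Finset.mem_filter.2 ⟨(Finset.mem_filter.1 hireg).1, hmissed i hireg⟩
      have := Finset.card_le_card hsub
      have := card_filter_misses_eq_singleton_add_le (m := m) (hc k hk)
      omega
    · rw [Finset.filter_false_of_mem fun i _ => by have := hmissedm i; omega, Finset.card_empty]
      omega
  obtain ⟨q, hlow, hhigh⟩ :=
    regular.exists_le_card_filter_lt_and_le_card_filter_le (t := t) missed hfiber (by omega)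
  refine ⟨q, hlow.trans (Finset.card_le_card fun i hi => ?_),
    hhigh.trans (Finset.card_le_card fun i hi => ?_)⟩
  all_goals
    obtain ⟨hireg, hiq⟩ := Finset.mem_filter.1 hi
    refine Finset.mem_filter.2 ⟨(Finset.mem_filter.1 hireg).1, missed i, ?_⟩
  · exact ⟨hiq, hmissed i hireg⟩
  · exact ⟨hmissedm i, hiq, hmissed i hireg⟩

theorem exists_le_card_prefers_of_cycle {g t u : ℕ} (hm : 0 < m) (hmg : m ≤ g)
    (hcm : c m = c 0) (hc : ∀ k < m, u ≤ (P.prefers (c (k + 1)) (c k)).card)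
    (hN : P.participants.card ≤ g * (t - 1)) (hg : 5 ≤ g) (ht : 2 ≤ t)
    (hu : (6 * g - 7) * (t - 1) < 6 * u) :
    ∃ q, t ≤ (P.prefers (c 0) (c q)).card ∧ t ≤ (P.prefers (c q) (c 0)).card := by
  obtain ⟨q, hlow, hhigh⟩ := exists_cut_of_cycle hm hmg hcm hc hN hg ht hu
  obtain ⟨i₀, hi₀⟩ := Finset.card_pos.1 (hlow.trans_lt' (by omega))
  obtain ⟨i₁, hi₁⟩ := Finset.card_pos.1 (hhigh.trans_lt' (by omega))
  obtain ⟨-, k₀, hk₀q, -⟩ := Finset.mem_filter.1 hi₀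
  obtain ⟨-, k₁, hk₁m, hqk₁, -⟩ := Finset.mem_filter.1 hi₁
  -- an agent missing only a step before `q` descends along `c q, …, c m = c 0`, one missing
  -- only a later step along `c 0, …, c q`
  refine ⟨q, hlow.trans (Finset.card_le_card fun i hi => ?_),
    hhigh.trans (Finset.card_le_card fun i hi => ?_)⟩
  · obtain ⟨-, k, hkq, hk⟩ := Finset.mem_filter.1 hi
    simpa [prefers, hcm] using rank_lt_of_misses_eq_singleton hk (hqk₁.trans_lt hk₁m) le_rfl
      (Or.inl hkq)
  · obtain ⟨-, k, -, hqk, hk⟩ := Finset.mem_filter.1 hi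
    simpa [prefers] using rank_lt_of_misses_eq_singleton hk (Nat.zero_lt_of_lt hk₀q)
      (hqk₁.trans hk₁m.le) (Or.inr hqk)

variable [Fintype G]

theorem lobby_le_sum_compl {y : G} (hy : y ∉ O) :
    P.lobby O y ≤ ∑ v ∈ Oᶜ, P.assignedCount Finset.univ v := by
  classical
  refine (Finset.card_le_card fun i hi => ?_).trans Finset.card_biUnion_le
  simp only [Finset.mem_filter, Finset.mem_univ, true_and] at hi
  obtain ⟨w, hw⟩ := exists_assigned_eq_some (assigned_eq_some_iff.1 hi).2.1 (Finset.mem_univ y)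
  have hwO : w ∉ O := fun hwO => hy <| by
    have := assigned_eq_some_of_subset_s19 (Finset.subset_univ (insert y O)) hw
      (Finset.mem_insert_of_mem hwO)
    rw [hi] at this
    obtain rfl := Option.some_injective _ this
    exact hwO
  exact Finset.mem_biUnion.2 ⟨w, Finset.mem_compl.2 hwO, by simpa using hw⟩

theorem uUncontestable_of_forall_notMem {t u : ℕ}
    (hsmall : ∀ v ∉ O, P.assignedCount Finset.univ v < t)
    (hu : (Fintype.card G - O.card) * (t - 1) < u) : P.UUncontestable O u := by
  intro y hy
  calc P.lobby O y ≤ ∑ v ∈ Oᶜ, P.assignedCount Finset.univ v := lobby_le_sum_compl hy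
    _ ≤ ∑ v ∈ Oᶜ, (t - 1) :=
      Finset.sum_le_sum fun v hv => Nat.le_sub_one_of_lt (hsmall v (Finset.mem_compl.1 hv))
    _ = (Fintype.card G - O.card) * (t - 1) := by
      rw [Finset.sum_const, Finset.card_compl, smul_eq_mul]
    _ < u := hu

theorem stable_pair_of_le_prefCount {t u : ℕ} (hab : a ≠ b) (ha : t ≤ P.prefCount a b)
    (hb : t ≤ P.prefCount b a)
    (hsmall : ∀ v ∉ ({a, b} : Finset G), P.assignedCount Finset.univ v < t)
    (hu : (Fintype.card G - 2) * (t - 1) < u) : P.Stable {a, b} t u := by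
  refine ⟨fun j hj => ?_, uUncontestable_of_forall_notMem hsmall ?_⟩
  · rcases Finset.mem_insert.1 hj with rfl | hj
    · exact ha
    · rw [Finset.mem_singleton.1 hj, Finset.pair_comm]
      exact hb
  · rwa [Finset.card_pair hab]

variable (P) in
theorem exists_tFeasible_forall_notMem_lt (t : ℕ) :
    ∃ M, P.TFeasible M t ∧ ∀ v ∉ M, P.assignedCount Finset.univ v < t := by
  obtain ⟨M, hM, hmin⟩ := Finset.exists_min_image
    (Finset.univ.filter fun M : Finset G => ∀ v ∉ M, P.assignedCount Finset.univ v < t)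
    Finset.card ⟨Finset.univ, by simp⟩
  simp only [Finset.mem_filter, Finset.mem_univ, true_and] at hM hmin
  refine ⟨M, fun z hz => ?_, hM⟩
  by_contra! hzt
  have hsmall : ∀ v ∉ M.erase z, P.assignedCount Finset.univ v < t := fun v hv => by
    by_cases hvz : v = z
    · subst hvz
      exact (assignedCount_le_of_subset_s19 (Finset.subset_univ M) hz).trans_lt hzt
    · exact hM v fun hvM => hv (Finset.mem_erase.2 ⟨hvz, hvM⟩)
  have := hmin _ hsmall
  rw [Finset.card_erase_of_mem hz] at this
  have := Finset.card_pos.2 ⟨z, hz⟩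
  omega

theorem card_participants_le {t : ℕ} (hsmall : ∀ v, P.assignedCount Finset.univ v < t) :
    P.participants.card ≤ Fintype.card G * (t - 1) := by
  classical
  calc P.participants.card ≤ ∑ v, P.assignedCount Finset.univ v := by
        refine (Finset.card_le_card fun i hi => ?_).trans Finset.card_biUnion_le
        simp only [participants, Finset.mem_filter, Finset.mem_univ, true_and] at hi
        obtain ⟨w, hw⟩ := exists_assigned_eq_some (List.head_mem hi) (Finset.mem_univ _)
        exact Finset.mem_biUnion.2 ⟨w, Finset.mem_univ _, by simpa using hw⟩
    _ ≤ ∑ _v : G, (t - 1) := Finset.sum_le_sum fun v _ => Nat.le_sub_one_of_lt (hsmall v)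
    _ = Fintype.card G * (t - 1) := by rw [Finset.sum_const, Finset.card_univ, smul_eq_mul]

theorem exists_stable_of_forall_assignedCount_univ_lt {t u : ℕ}
    (hsmall : ∀ v, P.assignedCount Finset.univ v < t) (hg : 5 ≤ Fintype.card G) (ht : 2 ≤ t)
    (hu : (6 * Fintype.card G - 7) * (t - 1) < 6 * u) : ∃ O, P.Stable O t u := by
  by_contra! hno
  obtain ⟨htu, hgu⟩ := le_and_sub_two_mul_lt_of_mul_lt hg hu
  let S := {a : G // u ≤ P.assignedCount {a} a}
  have : Nonempty S := by
    obtain ⟨a, -, ha⟩ : ∃ a ∉ (∅ : Finset G), u ≤ P.lobby ∅ a := by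
      simpa [UUncontestable] using fun h => hno ∅ ⟨fun j hj => absurd hj (Finset.notMem_empty j), h⟩
    exact ⟨⟨a, by simpa [lobby] using ha⟩⟩
  have hsucc : ∀ a : S, ∃ b : S, b.1 ≠ a.1 ∧ u ≤ P.prefCount b.1 a.1 := by
    rintro ⟨a, ha⟩
    obtain ⟨b, hb, hbu⟩ : ∃ b ∉ ({a} : Finset G), u ≤ P.lobby {a} b := by
      simpa [UUncontestable] using fun h =>
        hno {a} ⟨fun j hj => by rw [Finset.mem_singleton.1 hj]; exact htu.trans ha, h⟩
    exact ⟨⟨b, hbu.trans (assignedCount_le_of_subset_s19 (by simp) (by simp))⟩,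
      Finset.notMem_singleton.1 hb, hbu⟩
  choose F hF using hsucc
  obtain ⟨x, hx⟩ := Function.exists_mem_periodicPts F
  set c : ℕ → G := fun k => (F^[k] x).1
  obtain ⟨q, h0q, hq0⟩ := exists_le_card_prefers_of_cycle (P := P) (c := c)
    (Function.minimalPeriod_pos_of_mem_periodicPts hx)
    (Function.minimalPeriod_le_card.trans (Fintype.card_subtype_le _))
    (by simp [c, Function.iterate_minimalPeriod])
    (fun k _ => by
      simpa [c, Function.iterate_succ_apply', ← prefCount_eq_card_prefers (hF _).1] using (hF _).2)
    (card_participants_le hsmall) hg ht hu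
  have hne : c 0 ≠ c q := fun h => by simp [prefers, h] at h0q; omega
  exact hno _ (stable_pair_of_le_prefCount hne (by rwa [prefCount_eq_card_prefers hne])
    (by rwa [prefCount_eq_card_prefers hne.symm]) (fun v _ => hsmall v) hgu)

theorem exists_stable {t u : ℕ} (hg : 5 ≤ Fintype.card G) (ht : 2 ≤ t)
    (hu : (6 * Fintype.card G - 7) * (t - 1) < 6 * u) : ∃ O, P.Stable O t u := by
  by_cases hsmall : ∀ v, P.assignedCount Finset.univ v < t
  · exact exists_stable_of_forall_assignedCount_univ_lt hsmall hg ht hu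
  obtain ⟨w, hw⟩ : ∃ w, t ≤ P.assignedCount Finset.univ w := by simpa using hsmall
  obtain ⟨htu, hgu⟩ := le_and_sub_two_mul_lt_of_mul_lt hg hu
  obtain ⟨M, hMfeas, hMsmall⟩ := P.exists_tFeasible_forall_notMem_lt t
  have hwM : w ∈ M := by_contra fun h => (hMsmall w h).not_ge hw
  by_cases hM : 2 ≤ M.card
  · refine ⟨M, hMfeas, uUncontestable_of_forall_notMem hMsmall (lt_of_le_of_lt ?_ hgu)⟩
    exact Nat.mul_le_mul_right _ (by omega)
  obtain rfl : M = {w} := Finset.eq_singleton_iff_unique_mem.2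
    ⟨hwM, fun x hx => Finset.card_le_one.1 (by omega) x hx w hwM⟩
  by_cases hcon : P.UUncontestable {w} u
  · exact ⟨{w}, hMfeas, hcon⟩
  obtain ⟨y, hy, hyu⟩ : ∃ y ∉ ({w} : Finset G), u ≤ P.lobby {w} y := by
    simpa [UUncontestable] using hcon
  have hyw : y ≠ w := Finset.notMem_singleton.1 hy
  refine ⟨{y, w}, stable_pair_of_le_prefCount hyw (htu.trans hyu)
    (hw.trans (assignedCount_le_of_subset_s19 (Finset.subset_univ _) (by simp))) (fun v hv => ?_) hgu⟩
  exact hMsmall v fun h => hv (by simp [Finset.mem_singleton.1 h])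

end MenuProblem

theorem structural_upper_bound_general (g t u n : ℕ) (ε : ℝ) (hg : 5 ≤ g) (ht : 2 ≤ t)
    (hε : ε < 1 / 6)
    (hu : ((g : ℝ) - 1 - ε) * ((t : ℝ) - 1) ≤ (u : ℝ))
    (P : MenuProblem (Fin n) (Fin g)) :
    ∃ O : Finset (Fin g), P.Stable O t u := by
  have hu' : (6 * g - 7) * (t - 1) < 6 * u := by
    have hg' : (5 : ℝ) ≤ g := by exact_mod_cast hg
    have ht' : (2 : ℝ) ≤ t := by exact_mod_cast ht
    have : (((6 * g - 7) * (t - 1) : ℕ) : ℝ) < ((6 * u : ℕ) : ℝ) := by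
      rw [Nat.cast_mul, Nat.cast_sub (by omega), Nat.cast_sub (by omega)]
      push_cast
      nlinarith
    exact_mod_cast this
  exact P.exists_stable (by simpa using hg) ht (by simpa using hu')

/-- Structural upper bound: let `g ≥ 5`, `t ≥ 2`, and `u ≥ (g − 1 − ε)(t − 1)` with
`0 ≤ ε < 1/6`. Then every menu selection problem with `g` public goods has a
`(t,u)`-stable menu. -/
theorem structural_upper_bound (g t u n : ℕ) (ε : ℝ) (hg : 5 ≤ g) (ht : 2 ≤ t)
    (hε0 : 0 ≤ ε) (hε : ε < 1 / 6)
    (hu : ((g : ℝ) - 1 - ε) * ((t : ℝ) - 1) ≤ (u : ℝ))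
    (P : MenuProblem (Fin n) (Fin g)) :
    ∃ O : Finset (Fin g), P.Stable O t u :=
  structural_upper_bound_general g t u n ε hg ht hε hu P
end
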